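/- If a finite simplicial graph Γ with at least two vertices is not a join, then there exists a finite sequence of vertices s_1, s_2, ..., s_k such that consecutive vertices s_i, s_{i+1} are non-adjacent in Γ, s_k and s_1 are non-adjacent in Γ, the sequence visits every vertex of Γ at least once, and the intersection of the neighborhoods (links) of the s_i in Γ is empty. -/

import Mathlib

def SimpleGraph.IsJoinDecomp {V : Type*} (Γ : SimpleGraph V) (S₁ S₂ : Set V) : Prop :=
  S₁.Nonempty ∧ S₂.Nonempty ∧ Disjoint S₁ S₂ ∧ S₁ ∪ S₂ = Set.univ ∧
    ∀ s ∈ S₁, ∀ t ∈ S₂, Γ.Adj s t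

/-!
If `Γ` is not a join then `Γᶜ` is connected: otherwise the `Γᶜ`-component of a vertex and its
complement would be a join decomposition of `Γ`. Concatenating there-and-back walks from a base
point gives a closed walk in `Γᶜ` through every vertex, and reading it cyclically gives the
sequence. As every vertex `s` occurs and `s ∉ lk(s)`, the links have empty intersection.
-/

namespace SimpleGraph

variable {V : Type*}

theorem preconnected_compl_of_not_isJoinDecomp {Γ : SimpleGraph V}
    (hnj : ¬ ∃ S₁ S₂ : Set V, Γ.IsJoinDecomp S₁ S₂) : Γᶜ.Preconnected := by
  by_contra h
  obtain ⟨u, v, huv⟩ : ∃ u v, ¬ Γᶜ.Reachable u v := by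
    simpa only [Preconnected, not_forall] using h
  set C := {x | Γᶜ.Reachable u x}
  refine hnj ⟨C, Cᶜ, ⟨u, .refl u⟩, ⟨v, huv⟩, disjoint_compl_right, Set.union_compl_self C, ?_⟩
  intro s hs t ht
  by_contra hst
  have hne : s ≠ t := fun h => ht (h ▸ hs)
  exact ht (hs.trans ((Γ.compl_adj s t).mpr ⟨hne, hst⟩).reachable)

variable {G : SimpleGraph V}

theorem Preconnected.exists_walk_forall_mem_support (hG : G.Preconnected) (v : V)
    (s : Finset V) : ∃ w : G.Walk v v, ∀ x ∈ s, x ∈ w.support := by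
  classical
  induction s using Finset.induction_on with
  | empty => exact ⟨.nil, by simp⟩
  | insert x s _ ih =>
    obtain ⟨w, hw⟩ := ih
    let p : G.Walk v x := (hG v x).some
    refine ⟨(p.append p.reverse).append w, fun y hy => ?_⟩
    rw [Walk.mem_support_append_iff, Walk.mem_support_append_iff]
    rcases Finset.mem_insert.mp hy with rfl | hy
    · exact Or.inl (Or.inl p.end_mem_support)
    · exact Or.inr (hw y hy)

theorem Walk.exists_fin_cycle {v : V} (w : G.Walk v v) (hw : ¬ w.Nil) :
    ∃ (k : ℕ) (s : Fin (k + 1) → V),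
      (∀ i : Fin k, G.Adj (s i.castSucc) (s i.succ)) ∧ G.Adj (s (Fin.last k)) (s 0) ∧
      ∀ x ∈ w.support, x ∈ Set.range s := by
  obtain ⟨k, hk⟩ : ∃ k, w.length = k + 1 :=
    Nat.exists_eq_add_one.mpr (not_nil_iff_lt_length.mp hw)
  have hend : w.getVert (k + 1) = w.getVert 0 := by
    rw [← hk, getVert_length, getVert_zero]
  refine ⟨k, fun i => w.getVert i, fun i => ?_, ?_, fun x hx => ?_⟩
  · simpa using w.adj_getVert_succ (by omega : (i : ℕ) < w.length)
  · simpa [← hend] using w.adj_getVert_succ (by omega : k < w.length)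
  · obtain ⟨n, rfl, hn⟩ := mem_support_iff_exists_getVert.mp hx
    rcases Nat.lt_or_ge n (k + 1) with h | h
    · exact ⟨⟨n, h⟩, rfl⟩
    · exact ⟨0, by simp [show n = k + 1 by omega, hend]⟩

theorem iInter_neighborSet_eq_empty_of_surjective {ι : Type*} {s : ι → V}
    (hs : Function.Surjective s) : ⋂ i, G.neighborSet (s i) = ∅ := by
  refine Set.eq_empty_iff_forall_notMem.mpr fun x hx => ?_
  obtain ⟨i, rfl⟩ := hs x
  exact G.irrefl (Set.mem_iInter.mp hx i)

end SimpleGraph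

open SimpleGraph in
/-- if a finite graph `Γ` with at least two vertices is not a join, then there
is a finite sequence of vertices `s 0, …, s k` such that consecutive vertices are distinct
and non-adjacent, the last and first are distinct and non-adjacent, the sequence visits
every vertex, and the intersection of the links of the `s i` is empty. -/
theorem exists_closed_walk_in_complement {V : Type*} [Fintype V]
    (Γ : SimpleGraph V) (hV : 2 ≤ Fintype.card V)
    (hnj : ¬ ∃ S₁ S₂ : Set V, Γ.IsJoinDecomp S₁ S₂) :
    ∃ (k : ℕ) (s : Fin (k + 1) → V),
      (∀ i : Fin k, s i.castSucc ≠ s i.succ ∧ ¬ Γ.Adj (s i.castSucc) (s i.succ)) ∧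
      (s (Fin.last k) ≠ s 0 ∧ ¬ Γ.Adj (s (Fin.last k)) (s 0)) ∧
      Function.Surjective s ∧
      (⋂ i : Fin (k + 1), Γ.neighborSet (s i)) = ∅ := by
  obtain ⟨u, v, huv⟩ := Fintype.exists_pair_of_one_lt_card hV
  obtain ⟨w, hw⟩ :=
    (preconnected_compl_of_not_isJoinDecomp hnj).exists_walk_forall_mem_support u Finset.univ
  have hnil : ¬ w.Nil := fun h =>
    huv (by simpa [Walk.nil_iff_support_eq.mp h, eq_comm] using hw v (Finset.mem_univ v))
  obtain ⟨k, s, hstep, hclose, hcover⟩ := w.exists_fin_cycle hnil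
  have hsurj : Function.Surjective s := fun x => hcover x (hw x (Finset.mem_univ x))
  exact ⟨k, s, fun i => (Γ.compl_adj _ _).mp (hstep i), (Γ.compl_adj _ _).mp hclose, hsurj,
    iInter_neighborSet_eq_empty_of_surjective hsurj⟩
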